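/- arXiv:1506.08816 — 6 statements merged into one kernel-verified Lean document; each statement's English description precedes it below -/
import Mathlib

section
/- Let $t_1, t_2$ be complex numbers and $k_1, k_2$ real numbers with $0 < k_1 \le k_2$ and $k_2^2 |t_1 t_2| < 1$. Then $\left|\frac{(t_1-t_2)k_1}{1-\overline{t_2}t_1 k_1^2}\right| \le \left|\frac{(t_1-t_2)k_2}{1-\overline{t_2}t_1 k_2^2}\right|$. -/
/-!
With `c = conj t₂ * t₁`, the claim is that `k ↦ k / ‖1 - c k²‖` is monotone on `[0, k₂]`.
Expanding `‖1 - c x‖² = 1 - 2x Re c + x² ‖c‖²`, the real parts cancel in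
`y ‖1 - c x‖² - x ‖1 - c y‖² = (y - x) (1 - ‖c‖² x y)`, which is nonnegative for
`x = k₁² ≤ y = k₂²` as soon as `‖c‖ k₂² < 1`.
-/

open Complex

lemma mul_norm_one_sub_mul_sq_sub (c : ℂ) (x y : ℝ) :
    y * ‖1 - c * x‖ ^ 2 - x * ‖1 - c * y‖ ^ 2 = (y - x) * (1 - ‖c‖ ^ 2 * x * y) := by
  simp only [← normSq_eq_norm_sq, normSq_apply, sub_re, sub_im, mul_re, mul_im, one_re, one_im,
    ofReal_re, ofReal_im]
  ring

lemma mul_norm_one_sub_mul_sq_le {c : ℂ} {x y : ℝ} (hxy : x ≤ y) (h : ‖c‖ ^ 2 * x * y ≤ 1) :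
    x * ‖1 - c * y‖ ^ 2 ≤ y * ‖1 - c * x‖ ^ 2 := by
  have := mul_nonneg (sub_nonneg.2 hxy) (sub_nonneg.2 h)
  rw [← mul_norm_one_sub_mul_sq_sub] at this
  linarith

lemma norm_one_sub_pos {z : ℂ} (hz : ‖z‖ < 1) : 0 < ‖1 - z‖ := by
  have := norm_sub_norm_le (1 : ℂ) z
  rw [norm_one] at this
  linarith

lemma div_norm_one_sub_mul_sq_le {c : ℂ} {k₁ k₂ : ℝ} (hk₁ : 0 ≤ k₁) (hk : k₁ ≤ k₂)
    (h : ‖c‖ * k₂ ^ 2 < 1) :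
    k₁ / ‖1 - c * (k₁ : ℂ) ^ 2‖ ≤ k₂ / ‖1 - c * (k₂ : ℂ) ^ 2‖ := by
  have hsq : k₁ ^ 2 ≤ k₂ ^ 2 := pow_le_pow_left₀ hk₁ hk 2
  have hc₁ : ‖c‖ * k₁ ^ 2 ≤ ‖c‖ * k₂ ^ 2 := mul_le_mul_of_nonneg_left hsq (norm_nonneg c)
  have hnorm : ∀ k : ℝ, ‖c * (k : ℂ) ^ 2‖ = ‖c‖ * k ^ 2 := fun k => by
    rw [norm_mul, norm_pow, norm_real, Real.norm_eq_abs, sq_abs]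
  have hd₁ := norm_one_sub_pos ((hnorm k₁).trans_lt (hc₁.trans_lt h))
  have hd₂ := norm_one_sub_pos ((hnorm k₂).trans_lt h)
  have hprod : ‖c‖ ^ 2 * k₁ ^ 2 * k₂ ^ 2 ≤ 1 := by
    have := mul_le_mul hc₁ h.le (by positivity) (by positivity)
    nlinarith
  have key := mul_norm_one_sub_mul_sq_le (c := c) hsq hprod
  push_cast at key
  have hk₂ : 0 ≤ k₂ := hk₁.trans hk
  rw [div_le_div_iff₀ hd₁ hd₂, ← pow_le_pow_iff_left₀ (by positivity) (by positivity) two_ne_zero,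
    mul_pow, mul_pow]
  linarith

theorem stmt0 (t₁ t₂ : ℂ) (k₁ k₂ : ℝ) (hk₁ : 0 < k₁) (hk : k₁ ≤ k₂)
    (hlt : k₂ ^ 2 * ‖t₁ * t₂‖ < 1) :
    ‖(t₁ - t₂) * (k₁ : ℂ) / (1 - (starRingEnd ℂ) t₂ * t₁ * (k₁ : ℂ) ^ 2)‖ ≤
      ‖(t₁ - t₂) * (k₂ : ℂ) / (1 - (starRingEnd ℂ) t₂ * t₁ * (k₂ : ℂ) ^ 2)‖ := by
  have hc : ‖(starRingEnd ℂ) t₂ * t₁‖ * k₂ ^ 2 < 1 := by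
    rwa [norm_mul, norm_conj, mul_comm ‖t₂‖, ← norm_mul, mul_comm]
  have hnorm : ∀ k : ℝ, 0 ≤ k → ‖(t₁ - t₂) * (k : ℂ) / (1 - (starRingEnd ℂ) t₂ * t₁ * (k : ℂ) ^ 2)‖
      = ‖t₁ - t₂‖ * (k / ‖1 - (starRingEnd ℂ) t₂ * t₁ * (k : ℂ) ^ 2‖) := fun k hk => by
    rw [norm_div, norm_mul, norm_real, Real.norm_of_nonneg hk, mul_div_assoc]
  rw [hnorm k₁ hk₁.le, hnorm k₂ (hk₁.le.trans hk)]
  exact mul_le_mul_of_nonneg_left (div_norm_one_sub_mul_sq_le hk₁.le hk hc) (norm_nonneg _)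
end

section
/- Fix complex numbers $t_1, t_2$ with $t_1 t_2 \neq 0$, and define $F(k) = \frac{|t_1-t_2|^2 k^2}{1 + |t_1 t_2|^2 k^4 - 2k^2 \mathrm{Re}(\overline{t_2} t_1)}$ for real $k$. Then $F$ is monotonically nondecreasing on the interval $(0, 1/\sqrt{|t_1 t_2|})$. -/
/-!
Put `x = k²`, `A = ‖t₁ - t₂‖²`, `B = ‖t₁ t₂‖` and `C = Re(conj t₂ · t₁) ≤ B`. The function becomes
`A x / D(x)` with `D(x) = 1 + B² x² - 2 C x ≥ (1 - B x)²`, which is positive for `0 ≤ x < 1 / B`.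
Cross-multiplying, `y D(x) - x D(y) = (y - x)(1 - B² x y)`, and both factors are nonnegative
when `0 ≤ x ≤ y < 1 / B`.
-/

lemma sq_one_sub_mul_le_quadratic {B C x : ℝ} (hC : C ≤ B) (hx : 0 ≤ x) :
    (1 - B * x) ^ 2 ≤ 1 + B ^ 2 * x ^ 2 - 2 * C * x := by
  nlinarith

lemma quadratic_pos {B C x : ℝ} (hC : C ≤ B) (hx : 0 ≤ x) (hBx : B * x < 1) :
    0 < 1 + B ^ 2 * x ^ 2 - 2 * C * x :=
  (pow_pos (sub_pos.2 hBx) 2).trans_le (sq_one_sub_mul_le_quadratic hC hx)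

lemma monotoneOn_mul_div_quadratic {A B C : ℝ} (hA : 0 ≤ A) (hB : 0 ≤ B) (hC : C ≤ B) :
    MonotoneOn (fun x : ℝ => A * x / (1 + B ^ 2 * x ^ 2 - 2 * C * x))
      {x | 0 ≤ x ∧ B * x < 1} := by
  rintro x ⟨hx, hBx⟩ y ⟨hy, hBy⟩ hxy
  rw [div_le_div_iff₀ (quadratic_pos hC hx hBx) (quadratic_pos hC hy hBy)]
  have hBxy : B ^ 2 * x * y ≤ 1 := by
    have := mul_le_mul hBx.le hBy.le (mul_nonneg hB hy) zero_le_one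
    nlinarith
  have hcross : A * y * (1 + B ^ 2 * x ^ 2 - 2 * C * x) - A * x * (1 + B ^ 2 * y ^ 2 - 2 * C * y)
      = A * ((y - x) * (1 - B ^ 2 * x * y)) := by ring
  nlinarith [mul_nonneg hA (mul_nonneg (sub_nonneg.2 hxy) (sub_nonneg.2 hBxy))]

lemma mul_sq_lt_one_of_lt_one_div_sqrt {B k : ℝ} (hB : 0 ≤ B) (hk₀ : 0 < k)
    (hk : k < 1 / √B) : B * k ^ 2 < 1 := by
  have hs : 0 < √B := one_div_pos.mp (hk₀.trans hk)
  have hks : k * √B < 1 := (lt_div_iff₀ hs).mp hk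
  calc B * k ^ 2 = (k * √B) ^ 2 := by rw [mul_pow, Real.sq_sqrt hB, mul_comm]
    _ < 1 := pow_lt_one₀ (by positivity) hks two_ne_zero

theorem stmt1_general (t₁ t₂ : ℂ) :
    MonotoneOn
      (fun k : ℝ =>
        ‖t₁ - t₂‖ ^ 2 * k ^ 2 /
          (1 + ‖t₁ * t₂‖ ^ 2 * k ^ 4 - 2 * k ^ 2 * ((starRingEnd ℂ) t₂ * t₁).re))
      (Set.Ioo 0 (1 / Real.sqrt ‖t₁ * t₂‖)) := by
  have hC : ((starRingEnd ℂ) t₂ * t₁).re ≤ ‖t₁ * t₂‖ := by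
    simpa [mul_comm] using Complex.re_le_norm ((starRingEnd ℂ) t₂ * t₁)
  have hsq : MonotoneOn (fun k : ℝ => k ^ 2) (Set.Ioo 0 (1 / √‖t₁ * t₂‖)) :=
    pow_left_monotoneOn.mono fun k hk => le_of_lt hk.1
  have hmaps : Set.MapsTo (fun k : ℝ => k ^ 2) (Set.Ioo 0 (1 / √‖t₁ * t₂‖))
      {x | 0 ≤ x ∧ ‖t₁ * t₂‖ * x < 1} := fun k hk =>
    ⟨sq_nonneg k, mul_sq_lt_one_of_lt_one_div_sqrt (norm_nonneg _) hk.1 hk.2⟩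
  convert (monotoneOn_mul_div_quadratic (sq_nonneg ‖t₁ - t₂‖) (norm_nonneg _) hC).comp hsq hmaps
    using 1
  funext k
  simp only [Function.comp_apply]
  ring

theorem stmt1 (t₁ t₂ : ℂ) (h : t₁ * t₂ ≠ 0) :
    MonotoneOn
      (fun k : ℝ =>
        ‖t₁ - t₂‖ ^ 2 * k ^ 2 /
          (1 + ‖t₁ * t₂‖ ^ 2 * k ^ 4 - 2 * k ^ 2 * ((starRingEnd ℂ) t₂ * t₁).re))
      (Set.Ioo 0 (1 / Real.sqrt ‖t₁ * t₂‖)) :=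
  stmt1_general t₁ t₂
end

section
/- For any two complex numbers $s, t$ in the open unit disk $\mathbb{D}$, $\left|\frac{\mathrm{Re}(s) - \mathrm{Re}(t)}{1 - \mathrm{Re}(s)\,\mathrm{Re}(t)}\right| \le \left|\frac{s - t}{1 - \bar{s} t}\right|$. -/
/-!
Write `s = a + i x`, `t = b + i y`. After clearing denominators the inequality reads
`(a - b)² |1 - s̄ t|² ≤ |s - t|² (1 - a b)²`, and the difference of the two sides is the explicit
sum of squares `(x - y)² (1 - a²) (1 - b²) + (a - b)² (x² (1 - |t|²) + y² (1 - a²))`,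
each factor of which is nonnegative on the closed unit disk.
-/

open ComplexConjugate

namespace Complex

theorem normSq_sub_mul_sub_sq_mul_normSq_one_sub_conj_mul (s t : ℂ) :
    normSq (s - t) * (1 - s.re * t.re) ^ 2 - (s.re - t.re) ^ 2 * normSq (1 - conj s * t) =
      (s.im - t.im) ^ 2 * (1 - s.re ^ 2) * (1 - t.re ^ 2) +
        (s.re - t.re) ^ 2 * (s.im ^ 2 * (1 - normSq t) + t.im ^ 2 * (1 - s.re ^ 2)) := by
  simp only [normSq_apply, sub_re, sub_im, one_re, one_im, mul_re, mul_im, conj_re, conj_im]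
  ring

theorem re_sq_le_one_of_norm_le_one {z : ℂ} (hz : ‖z‖ ≤ 1) : z.re ^ 2 ≤ 1 := by
  rw [sq_le_one_iff_abs_le_one]
  exact (abs_re_le_norm z).trans hz

theorem sub_re_sq_mul_normSq_le (s t : ℂ) (hs : ‖s‖ ≤ 1) (ht : ‖t‖ ≤ 1) :
    (s.re - t.re) ^ 2 * normSq (1 - conj s * t) ≤ normSq (s - t) * (1 - s.re * t.re) ^ 2 := by
  have hsre := sub_nonneg.2 (re_sq_le_one_of_norm_le_one hs)
  have htre := sub_nonneg.2 (re_sq_le_one_of_norm_le_one ht)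
  have htn : 0 ≤ 1 - normSq t := by
    rw [normSq_eq_norm_sq, sub_nonneg]
    exact pow_le_one₀ (norm_nonneg t) ht
  rw [← sub_nonneg, normSq_sub_mul_sub_sq_mul_normSq_one_sub_conj_mul]
  positivity

theorem one_sub_conj_mul_ne_zero {s t : ℂ} (hs : ‖s‖ < 1) (ht : ‖t‖ ≤ 1) :
    1 - conj s * t ≠ 0 := by
  rw [sub_ne_zero]
  intro h
  have : ‖conj s * t‖ < 1 := by
    rw [norm_mul, norm_conj]
    exact mul_lt_one_of_nonneg_of_lt_one_left (norm_nonneg s) hs ht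
  simp [← h] at this

theorem re_mul_re_lt_one {s t : ℂ} (hs : ‖s‖ < 1) (ht : ‖t‖ ≤ 1) : s.re * t.re < 1 := by
  refine (le_abs_self _).trans_lt ?_
  rw [abs_mul]
  exact mul_lt_one_of_nonneg_of_lt_one_left (abs_nonneg _)
    ((abs_re_le_norm s).trans_lt hs) ((abs_re_le_norm t).trans ht)

end Complex

open Complex in
theorem stmt2 (s t : ℂ) (hs : ‖s‖ < 1) (ht : ‖t‖ < 1) :
    |(s.re - t.re) / (1 - s.re * t.re)| ≤
      ‖(s - t) / (1 - (starRingEnd ℂ) s * t)‖ := by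
  have hre : 0 < 1 - s.re * t.re := sub_pos.2 (re_mul_re_lt_one hs ht.le)
  have hden : 0 < normSq (1 - conj s * t) :=
    normSq_pos.2 (one_sub_conj_mul_ne_zero hs ht.le)
  rw [← pow_le_pow_iff_left₀ (abs_nonneg _) (norm_nonneg _) two_ne_zero, sq_abs,
    ← normSq_eq_norm_sq, normSq_div, div_pow, div_le_div_iff₀ (pow_pos hre 2) hden]
  exact sub_re_sq_mul_normSq_le s t hs.le ht.le
end

section
/- Let $k \in (0,1]$ and $s, t \in \mathbb{D}$ (the open unit disk in $\mathbb{C}$). Then $\left|\frac{(\mathrm{Re}(s) - \mathrm{Re}(t))\,k}{1 - \mathrm{Re}(s)\,\mathrm{Re}(t)\,k^2}\right| \le \left|\frac{t - s}{1 - s\bar{t}}\right|$. -/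
/-!
The map `k ↦ (a - b) k / (1 - a b k²)` has absolute value increasing in `|k| ≤ 1`, so the left side
is at most the real pseudo-hyperbolic distance `|(a - b) / (1 - a b)|` of `a = Re s` and `b = Re t`.
That distance is at most the pseudo-hyperbolic distance of `s` and `t`, by an explicit
sum-of-squares identity in the coordinates of `s` and `t`.
-/

open ComplexConjugate

lemma abs_mul_div_one_sub_mul_sq_le {a b k : ℝ} (ha : |a| < 1) (hb : |b| < 1) (hk : |k| ≤ 1) :
    |(a - b) * k / (1 - a * b * k ^ 2)| ≤ |(a - b) / (1 - a * b)| := by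
  have hab : |a * b| < 1 := by
    rw [abs_mul]; nlinarith [abs_nonneg a, abs_nonneg b]
  have hk2 : k ^ 2 ≤ 1 := by nlinarith [sq_abs k, abs_nonneg k]
  have hden : 0 < 1 - a * b := by linarith [le_abs_self (a * b)]
  have hdenk : 0 < 1 - a * b * k ^ 2 := by
    nlinarith [abs_le.1 hab.le, sq_nonneg k]
  rw [← sq_le_sq, div_pow, div_pow, div_le_div_iff₀ (by positivity) (by positivity)]
  -- `(1 - a b u)² - u (1 - a b)² = (1 - u) (1 - a² b² u)` with `u = k²`
  have key : k ^ 2 * (1 - a * b) ^ 2 ≤ (1 - a * b * k ^ 2) ^ 2 := by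
    have : 0 ≤ 1 - (a * b) ^ 2 * k ^ 2 := by
      nlinarith [sq_abs (a * b), abs_nonneg (a * b), sq_nonneg k]
    nlinarith [mul_nonneg (sub_nonneg.2 hk2) this]
  calc ((a - b) * k) ^ 2 * (1 - a * b) ^ 2 = (a - b) ^ 2 * (k ^ 2 * (1 - a * b) ^ 2) := by ring
    _ ≤ (a - b) ^ 2 * (1 - a * b * k ^ 2) ^ 2 := by gcongr

lemma abs_re_sub_re_div_le_norm {s t : ℂ} (hs : ‖s‖ < 1) (ht : ‖t‖ < 1) :
    |(s.re - t.re) / (1 - s.re * t.re)| ≤ ‖(t - s) / (1 - s * conj t)‖ := by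
  obtain ⟨a, c⟩ := s
  obtain ⟨b, d⟩ := t
  have hac : a ^ 2 + c ^ 2 < 1 := by
    rw [← sq_lt_one_iff₀ (norm_nonneg _), Complex.sq_norm, Complex.normSq_mk] at hs; linarith
  have hbd : b ^ 2 + d ^ 2 < 1 := by
    rw [← sq_lt_one_iff₀ (norm_nonneg _), Complex.sq_norm, Complex.normSq_mk] at ht; linarith
  have hden : 0 < 1 - a * b := by nlinarith [sq_nonneg (a - b), sq_nonneg c, sq_nonneg d]
  have hre : 0 < 1 - a * b - c * d := by nlinarith [sq_nonneg (a - b), sq_nonneg (c - d)]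
  rw [← sq_le_sq₀ (abs_nonneg _) (norm_nonneg _), sq_abs, Complex.sq_norm, Complex.normSq_div]
  simp only [Complex.normSq_apply, Complex.sub_re, Complex.sub_im, Complex.mul_re,
    Complex.mul_im, Complex.conj_re, Complex.conj_im, Complex.one_re, Complex.one_im]
  rw [div_pow, div_le_div_iff₀ (by positivity) (by nlinarith [sq_nonneg (a * -d + c * b)])]
  -- The difference of the two sides is
  -- `(c - d)² (1 - a²)(1 - b²) + (a - b)² (1 - a²) d² + (a - b)² c² (1 - b² - d²)`.
  nlinarith [mul_nonneg (sq_nonneg (c - d)) (mul_nonneg (by nlinarith : 0 ≤ 1 - a ^ 2)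
      (by nlinarith : 0 ≤ 1 - b ^ 2)),
    mul_nonneg (sq_nonneg (a - b)) (mul_nonneg (by nlinarith : 0 ≤ 1 - a ^ 2) (sq_nonneg d)),
    mul_nonneg (sq_nonneg (a - b)) (mul_nonneg (sq_nonneg c) (by linarith : 0 ≤ 1 - b ^ 2 - d ^ 2))]

theorem stmt3 (k : ℝ) (hk : k ∈ Set.Ioc (0 : ℝ) 1) (s t : ℂ)
    (hs : ‖s‖ < 1) (ht : ‖t‖ < 1) :
    |(s.re - t.re) * k / (1 - s.re * t.re * k ^ 2)| ≤
      ‖(t - s) / (1 - s * (starRingEnd ℂ) t)‖ := by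
  have hk' : |k| ≤ 1 := abs_le.2 ⟨by linarith [hk.1], hk.2⟩
  calc |(s.re - t.re) * k / (1 - s.re * t.re * k ^ 2)|
      ≤ |(s.re - t.re) / (1 - s.re * t.re)| :=
        abs_mul_div_one_sub_mul_sq_le ((Complex.abs_re_le_norm s).trans_lt hs)
          ((Complex.abs_re_le_norm t).trans_lt ht) hk'
    _ ≤ ‖(t - s) / (1 - s * conj t)‖ := abs_re_sub_re_div_le_norm hs ht
end

section
/- The map $z \mapsto \mathrm{Re}(z)$ from the open unit disk $\mathbb{D}$ to the interval $(-1,1)$ is 1-Lipschitz with respect to the hyperbolic (Poincaré) metric, i.e., for all $s, t \in \mathbb{D}$, $d_H(\mathrm{Re}(s), \mathrm{Re}(t)) \le d_H(s, t)$, where $d_H(z_1,z_2) = \frac{1}{2}\log\frac{1+\left|\frac{z_1-z_2}{1-\bar{z}_1 z_2}\right|}{1-\left|\frac{z_1-z_2}{1-\bar{z}_1 z_2}\right|}$. -/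
noncomputable def dH (z₁ z₂ : ℂ) : ℝ :=
  (1 / 2) * Real.log
    ((1 + ‖(z₁ - z₂) / (1 - (starRingEnd ℂ) z₁ * z₂)‖) /
     (1 - ‖(z₁ - z₂) / (1 - (starRingEnd ℂ) z₁ * z₂)‖))

/-!
With `ρ(z, w) = |z - w| / |1 - z̄ w|` the pseudo-hyperbolic distance, `d_H = artanh ∘ ρ`, so it
suffices to show `ρ(Re s, Re t) ≤ ρ(s, t)`. The identity
`|1 - z̄ w|² = |z - w|² + (1 - |z|²)(1 - |w|²)` turns this into the polynomial inequality
`(a - c)² (1 - |s|²)(1 - |t|²) ≤ |s - t|² (1 - a²)(1 - c²)` for `a = Re s`, `c = Re t`,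
whose difference is a sum of nonnegative terms.
-/

open Complex ComplexConjugate

noncomputable def pseudoHypDist (z w : ℂ) : ℝ := ‖(z - w) / (1 - conj z * w)‖

lemma pseudoHypDist_nonneg (z w : ℂ) : 0 ≤ pseudoHypDist z w := norm_nonneg _

lemma normSq_one_sub_conj_mul (z w : ℂ) :
    normSq (1 - conj z * w) = normSq (z - w) + (1 - normSq z) * (1 - normSq w) := by
  simp only [normSq_apply, sub_re, sub_im, mul_re, mul_im, conj_re, conj_im, one_re, one_im]
  ring

lemma pseudoHypDist_sq (z w : ℂ) :
    pseudoHypDist z w ^ 2 =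
      normSq (z - w) / (normSq (z - w) + (1 - normSq z) * (1 - normSq w)) := by
  rw [pseudoHypDist, norm_div, div_pow, Complex.sq_norm, Complex.sq_norm,
    normSq_one_sub_conj_mul]

lemma normSq_sub_add_mul_pos {z w : ℂ} (hz : normSq z < 1) (hw : normSq w < 1) :
    0 < normSq (z - w) + (1 - normSq z) * (1 - normSq w) :=
  add_pos_of_nonneg_of_pos (normSq_nonneg _) (mul_pos (by linarith) (by linarith))

lemma pseudoHypDist_lt_one {z w : ℂ} (hz : normSq z < 1) (hw : normSq w < 1) :
    pseudoHypDist z w < 1 := by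
  have hsq : pseudoHypDist z w ^ 2 < 1 := by
    rw [pseudoHypDist_sq, div_lt_one (normSq_sub_add_mul_pos hz hw)]
    nlinarith
  exact (pow_lt_one_iff_of_nonneg (pseudoHypDist_nonneg z w) two_ne_zero).mp hsq

lemma dH_eq_artanh {z w : ℂ} (h : pseudoHypDist z w ≤ 1) :
    dH z w = Real.artanh (pseudoHypDist z w) :=
  (Real.artanh_eq_half_log ⟨by linarith [pseudoHypDist_nonneg z w], h⟩).symm

lemma normSq_ofReal_re_lt_one {z : ℂ} (hz : normSq z < 1) : normSq (z.re : ℂ) < 1 := by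
  rw [normSq_ofReal]
  exact (re_sq_le_normSq z).trans_lt hz

lemma normSq_re_sub_mul_le {s t : ℂ} (hs : normSq s ≤ 1) (ht : normSq t ≤ 1) :
    normSq ((s.re : ℂ) - t.re) * ((1 - normSq s) * (1 - normSq t)) ≤
      normSq (s - t) * ((1 - normSq (s.re : ℂ)) * (1 - normSq (t.re : ℂ))) := by
  obtain ⟨a, b⟩ := s
  obtain ⟨c, d⟩ := t
  simp only [normSq_apply, sub_re, sub_im, ofReal_re, ofReal_im] at hs ht ⊢
  have ha : 0 ≤ 1 - a * a := by nlinarith [mul_self_nonneg b]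
  have hc : 0 ≤ 1 - c * c := by nlinarith [mul_self_nonneg d]
  have hd : 0 ≤ 1 - (c * c + d * d) := by linarith
  have key : 0 ≤ (a - c) ^ 2 * (b ^ 2 * (1 - (c * c + d * d)) + d ^ 2 * (1 - a * a)) +
      (b - d) ^ 2 * ((1 - a * a) * (1 - c * c)) := by
    positivity
  linear_combination key

lemma pseudoHypDist_re_le {s t : ℂ} (hs : normSq s < 1) (ht : normSq t < 1) :
    pseudoHypDist s.re t.re ≤ pseudoHypDist s t := by
  refine (pow_le_pow_iff_left₀ (pseudoHypDist_nonneg _ _) (pseudoHypDist_nonneg _ _)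
    two_ne_zero).mp ?_
  rw [pseudoHypDist_sq, pseudoHypDist_sq,
    div_le_div_iff₀ (normSq_sub_add_mul_pos (normSq_ofReal_re_lt_one hs)
      (normSq_ofReal_re_lt_one ht)) (normSq_sub_add_mul_pos hs ht)]
  linear_combination normSq_re_sub_mul_le hs.le ht.le

theorem stmt4 (s t : ℂ) (hs : ‖s‖ < 1) (ht : ‖t‖ < 1) :
    dH (s.re : ℂ) (t.re : ℂ) ≤ dH s t := by
  have hs' : normSq s < 1 := by
    rw [← Complex.sq_norm]; exact pow_lt_one₀ (norm_nonneg s) hs two_ne_zero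
  have ht' : normSq t < 1 := by
    rw [← Complex.sq_norm]; exact pow_lt_one₀ (norm_nonneg t) ht two_ne_zero
  have hle := pseudoHypDist_re_le hs' ht'
  have hlt := pseudoHypDist_lt_one hs' ht'
  rw [dH_eq_artanh hlt.le, dH_eq_artanh (hle.trans hlt.le)]
  exact Real.artanh_le_artanh
    (by linarith [pseudoHypDist_nonneg (s.re : ℂ) t.re]) hlt hle
end

section
/- For $s,t \in \mathbb{D}$ and $u \in [0,1]$, $\frac{|s-t|\,u}{|1 - s\bar{t}u^2|} \le \frac{|s-t|}{|1-s\bar{t}|}$. -/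
lemma aux17 (z : ℂ) (h : ‖z‖ < 1) : 0 < ‖1 - z‖ := by
  have : z ≠ 1 := by rintro rfl; simp at h
  exact norm_pos_iff.2 (sub_ne_zero.mpr (Ne.symm this))

theorem stmt17 (s t : ℂ) (hs : ‖s‖ < 1) (ht : ‖t‖ < 1)
    (u : ℝ) (hu : u ∈ Set.Icc (0 : ℝ) 1) :
    ‖s - t‖ * u / ‖1 - s * (starRingEnd ℂ) t * (u : ℂ) ^ 2‖ ≤
      ‖s - t‖ / ‖1 - s * (starRingEnd ℂ) t‖ := by
  obtain ⟨hu0, hu1⟩ := hu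
  set w : ℂ := s * (starRingEnd ℂ) t with hw
  have habs : ‖w‖ < 1 := by
    rw [hw, norm_mul, Complex.norm_conj]
    nlinarith [norm_nonneg s, norm_nonneg t]
  have hC : 0 < ‖1 - w‖ := aux17 w habs
  have hB : 0 < ‖1 - w * (u : ℂ) ^ 2‖ := by
    apply aux17
    rw [norm_mul, norm_pow, Complex.norm_real, Real.norm_eq_abs]
    have h1 : |u| ≤ 1 := abs_le.2 ⟨by linarith, hu1⟩
    have h2 : |u| ^ 2 ≤ 1 := by nlinarith [abs_nonneg u]
    nlinarith [norm_nonneg w, abs_nonneg u, sq_nonneg u,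
      mul_le_one₀ (le_of_lt habs) (sq_nonneg |u|) h2]
  -- key inequality
  have key : u * ‖1 - w‖ ≤ ‖1 - w * (u : ℂ) ^ 2‖ := by
    have hsq : (u * ‖1 - w‖) ^ 2 ≤ (‖1 - w * (u : ℂ) ^ 2‖) ^ 2 := by
      have e1 : (‖1 - w‖) ^ 2 = 1 - 2 * w.re + Complex.normSq w := by
        rw [Complex.sq_norm]
        simp [Complex.normSq_apply, Complex.sub_re, Complex.sub_im]
        ring
      have e2 : (‖1 - w * (u : ℂ) ^ 2‖) ^ 2
          = 1 - 2 * u ^ 2 * w.re + u ^ 4 * Complex.normSq w := by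
        rw [Complex.sq_norm]
        simp [Complex.normSq_apply, Complex.sub_re, Complex.sub_im, Complex.mul_re,
          Complex.mul_im, ← Complex.ofReal_pow]
        ring
      have hns : Complex.normSq w < 1 := by
        have := Complex.sq_norm w
        nlinarith [norm_nonneg w]
      have habsre : |w.re| ≤ ‖w‖ := Complex.abs_re_le_norm w
      have hu2 : u ^ 2 ≤ 1 := by nlinarith
      have hA : 0 ≤ 1 - u ^ 2 := by linarith
      have hBn : 0 ≤ 1 - u ^ 2 * Complex.normSq w := by
        nlinarith [Complex.normSq_nonneg w, sq_nonneg u]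
      rw [mul_pow, e1, e2]
      nlinarith [mul_nonneg hA hBn]
    have h2 : 0 ≤ u * ‖1 - w‖ := mul_nonneg hu0 (norm_nonneg _)
    nlinarith [hsq, h2, norm_nonneg (1 - w * (u : ℂ) ^ 2)]
  rw [div_le_div_iff₀ hB hC]
  calc ‖s - t‖ * u * ‖1 - w‖
      = ‖s - t‖ * (u * ‖1 - w‖) := by ring
    _ ≤ ‖s - t‖ * ‖1 - w * (u : ℂ) ^ 2‖ :=
        mul_le_mul_of_nonneg_left key (norm_nonneg _)
end
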